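/- Let (X, φ, ⟨⟨·,·⟩⟩) be a Hilbert A-bimodule over a C*-algebra A. For ξ,η ∈ X, the element ⟨⟨ξ,η⟩⟩ is the unique element a of J_X = φ⁻¹(K(X)) ∩ (ker φ)^⊥ satisfying φ(a) = θ_{ξ,η}. In particular, the left inner product of a Hilbert A-bimodule is completely determined by its structure as a C*-correspondence. -/

import Mathlib

/-!
Both `⟨⟨ξ, η⟩⟩` and any `a ∈ J_X` with `φ a = θ_{ξ,η}` annihilate `ker φ` from the left: for
`⟨⟨ξ, η⟩⟩` because `b ⟨⟨η, ξ⟩⟩ = ⟨⟨φ(b) η, ξ⟩⟩ = 0` for `b ∈ ker φ`, applied to `b b⋆`, together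
with the C⋆-identity. Their difference `d` lies in `ker φ`, hence `d (d⋆ d) = 0`, and the
C⋆-identity forces `d = 0`.
-/

open scoped RightActions

/-- The Hilbert C⋆-module class `CStarModule` as it stood in Mathlib (December 2024):
a right `A`-module (action of `Aᵐᵒᵖ`) with an `A`-valued inner product. -/
class OldCStarModule (A E : Type*) [NonUnitalSemiring A] [StarRing A] [Module ℂ A]
    [AddCommGroup E] [Module ℂ E] [PartialOrder A] [SMul Aᵐᵒᵖ E] [Norm A] [Norm E]
    extends Inner A E where
  inner_add_right {x} {y} {z} : inner x (y + z) = inner x y + inner x z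
  inner_self_nonneg {x} : 0 ≤ inner x x
  inner_self {x} : inner x x = 0 ↔ x = 0
  inner_op_smul_right {a : A} {x y : E} : inner x (y <• a) = inner x y * a
  inner_smul_right_complex {z : ℂ} {x} {y} : inner x (z • y) = z • inner x y
  star_inner x y : star (inner x y) = inner y x
  norm_eq_sqrt_norm_inner_self x : ‖x‖ = Real.sqrt ‖inner x x‖

variable {A X : Type*} [NonUnitalCStarAlgebra A] [PartialOrder A] [StarOrderedRing A]
  [NormedAddCommGroup X] [NormedSpace ℂ X] [SMul Aᵐᵒᵖ X] [OldCStarModule A X] [CompleteSpace X]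

/-- `K(X)`: the closed linear span in `B(X)` of the rank-one operators
`θ_{ξ,η} : ζ ↦ ξ • ⟪η, ζ⟫`. -/
def compactOps (A X : Type*) [NonUnitalCStarAlgebra A] [PartialOrder A] [StarOrderedRing A]
    [NormedAddCommGroup X] [NormedSpace ℂ X] [SMul Aᵐᵒᵖ X] [OldCStarModule A X]
    [CompleteSpace X] : Set (X →L[ℂ] X) :=
  closure (Submodule.span ℂ
    {T : X →L[ℂ] X | ∃ ξ η : X, ∀ ζ : X, T ζ = ξ <• (inner A η ζ : A)} : Set (X →L[ℂ] X))

/-- The ideal `J_X = φ⁻¹(K(X)) ∩ (ker φ)^⊥` of Katsura, as a subset of `A`. -/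
def KatsuraIdeal (φ : A →ₙₐ[ℂ] (X →L[ℂ] X)) : Set A :=
  {a : A | φ a ∈ compactOps A X} ∩ {a : A | ∀ b : A, φ b = 0 → a * b = 0}

theorem eq_of_map_eq_of_forall_mul_ker_eq_zero {E F B : Type*} [NonUnitalNormedRing E]
    [StarRing E] [CStarRing E] [NonUnitalNonAssocRing B] [FunLike F E B]
    [NonUnitalRingHomClass F E B] (φ : F) {a c : E}
    (ha : ∀ b, φ b = 0 → a * b = 0) (hc : ∀ b, φ b = 0 → c * b = 0) (h : φ a = φ c) :
    a = c := by
  set d := a - c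
  have hd : φ (star d * d) = 0 := by rw [map_mul, map_sub, h, sub_self, mul_zero]
  have hdd : d * (star d * d) = 0 := by rw [sub_mul, ha _ hd, hc _ hd, sub_zero]
  have hdd' : d * star d * star (d * star d) = 0 := by
    rw [star_mul, star_star, ← mul_assoc, mul_assoc d, hdd, zero_mul]
  rwa [← sub_eq_zero, ← CStarRing.mul_star_self_eq_zero_iff, ← CStarRing.mul_star_self_eq_zero_iff]

section LeftInner

variable {E Y : Type*} [NonUnitalCStarAlgebra E] [NormedAddCommGroup Y] [NormedSpace ℂ Y]
  {φ : E →ₙₐ[ℂ] (Y →L[ℂ] Y)} {L : Y → Y → E}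

theorem mul_left_inner_eq_zero_of_map_eq_zero
    (h1 : ∀ (a : E) (ξ η : Y), L (φ a ξ) η = a * L ξ η) {b : E} (hb : φ b = 0) (ξ η : Y) :
    b * L ξ η = 0 :=
  calc b * L ξ η = L (φ b ξ) η := (h1 b ξ η).symm
    _ = L (φ 0 0) η := by simp [hb]
    _ = 0 := by rw [h1, zero_mul]

theorem left_inner_mul_eq_zero_of_map_eq_zero
    (h1 : ∀ (a : E) (ξ η : Y), L (φ a ξ) η = a * L ξ η)
    (h2 : ∀ ξ η : Y, L ξ η = star (L η ξ)) {b : E} (hb : φ b = 0) (ξ η : Y) :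
    L ξ η * b = 0 := by
  have hbb : φ (b * star b) = 0 := by rw [map_mul, hb, zero_mul]
  rw [← CStarRing.mul_star_self_eq_zero_iff, star_mul, ← h2, mul_assoc, ← mul_assoc b,
    mul_left_inner_eq_zero_of_map_eq_zero h1 hbb, mul_zero]

end LeftInner

theorem mem_compactOps_of_forall_apply_eq {T : X →L[ℂ] X} (ξ η : X)
    (hT : ∀ ζ : X, T ζ = ξ <• (inner A η ζ : A)) : T ∈ compactOps A X :=
  subset_closure (Submodule.subset_span ⟨ξ, η, hT⟩)

theorem bimodule_left_inner_unique_general (φ : A →ₙₐ[ℂ] (X →L[ℂ] X))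
    (L : X → X → A)
    (h1 : ∀ (a : A) (ξ η : X), L (φ a ξ) η = a * L ξ η)
    (h2 : ∀ ξ η : X, L ξ η = star (L η ξ))
    (h4 : ∀ ξ η ζ : X, φ (L ξ η) ζ = ξ <• (inner A η ζ : A)) :
    ∀ ξ η : X,
      L ξ η ∈ KatsuraIdeal φ ∧
      (∀ ζ : X, φ (L ξ η) ζ = ξ <• (inner A η ζ : A)) ∧
      ∀ a ∈ KatsuraIdeal φ, (∀ ζ : X, φ a ζ = ξ <• (inner A η ζ : A)) → a = L ξ η := by
  intro ξ η
  have hperp : ∀ b : A, φ b = 0 → L ξ η * b = 0 := fun b hb =>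
    left_inner_mul_eq_zero_of_map_eq_zero h1 h2 hb ξ η
  refine ⟨⟨mem_compactOps_of_forall_apply_eq ξ η (h4 ξ η), hperp⟩, h4 ξ η, ?_⟩
  rintro a ⟨-, ha⟩ hφa
  refine eq_of_map_eq_of_forall_mul_ker_eq_zero φ ha hperp ?_
  ext ζ
  rw [hφa, h4]

/-- Let `(X, φ, L)` be a Hilbert `A`-bimodule (here `L ξ η = ⟨⟨ξ, η⟩⟩` is the left inner
product).  For `ξ, η ∈ X`, the element `⟨⟨ξ, η⟩⟩` is the unique element `a` of
`J_X = φ⁻¹(K(X)) ∩ (ker φ)^⊥` with `φ(a) = θ_{ξ,η}`; in particular the left inner product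
is completely determined by the structure of `X` as a C*-correspondence. -/
theorem bimodule_left_inner_unique (φ : A →ₙₐ[ℂ] (X →L[ℂ] X))
    (hmod : ∀ (a : A) (ξ : X) (b : A), φ a (ξ <• b) = (φ a ξ) <• b)
    (L : X → X → A)
    (hadd : ∀ ξ₁ ξ₂ η : X, L (ξ₁ + ξ₂) η = L ξ₁ η + L ξ₂ η)
    (hsmul : ∀ (c : ℂ) (ξ η : X), L (c • ξ) η = c • L ξ η)
    (h1 : ∀ (a : A) (ξ η : X), L (φ a ξ) η = a * L ξ η)
    (h2 : ∀ ξ η : X, L ξ η = star (L η ξ))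
    (h3 : ∀ ξ : X, 0 ≤ L ξ ξ)
    (h4 : ∀ ξ η ζ : X, φ (L ξ η) ζ = ξ <• (inner A η ζ : A)) :
    ∀ ξ η : X,
      L ξ η ∈ KatsuraIdeal φ ∧
      (∀ ζ : X, φ (L ξ η) ζ = ξ <• (inner A η ζ : A)) ∧
      ∀ a ∈ KatsuraIdeal φ, (∀ ζ : X, φ a ζ = ξ <• (inner A η ζ : A)) → a = L ξ η :=
  bimodule_left_inner_unique_general φ L h1 h2 h4
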